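/- With σ₁, σ₂ nonzero real constants, the function Z⁽¹⁾(i)(x₁,x₂) = −(1/σ₁)e^{σ₂x₂} sinh(σ₁x₁) + (i/σ₂)e^{σ₁x₁} sinh(σ₂x₂) is a solution of the Vekua equation ∂_ζ̄ W − (σ₂ − iσ₁)·conj(W) = 0 with ∂_ζ̄ = ∂/∂x₂ + i∂/∂x₁, vanishes at the origin, and satisfies Z⁽¹⁾(i)(x₁,x₂)/(x₂ + ix₁) → i as (x₁,x₂) → (0,0). -/

import Mathlib

/-!
Write `Z = u + i v`. The Vekua equation with coefficient `σ₂ − iσ₁` is the real system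
`u_{x₂} − v_{x₁} = σ₂ u − σ₁ v`, `v_{x₂} + u_{x₁} = −(σ₁ u + σ₂ v)`. For the given `u, v` the first
equation is immediate, and the second reduces, via `cosh + sinh = exp`, to
`e^{σ₁x₁} e^{σ₂x₂} = e^{σ₂x₂} e^{σ₁x₁}`.

For the limit: `Z` vanishes at the origin with real derivative `(x₁, x₂) ↦ −x₁ + i x₂ = i ζ`, and
`ζ` is a real-linear isomorphism `ℝ² ≃ ℂ`, so `Z − i ζ = o(ζ)` and `Z / ζ → i`.
-/

/-- `∂_ζ̄ = ∂/∂x₂ + i ∂/∂x₁`, for `ζ = x₂ + i x₁`. -/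
noncomputable def dzetabar (F : ℝ → ℝ → ℂ) (x₁ x₂ : ℝ) : ℂ :=
  deriv (fun t => F x₁ t) x₂ + Complex.I * deriv (fun t => F t x₂) x₁

open Complex Filter Topology Asymptotics

theorem dzetabar_ofReal_add_I_mul {u v : ℝ → ℝ → ℝ} {x₁ x₂ u₁ u₂ v₁ v₂ : ℝ}
    (hu₁ : HasDerivAt (fun t => u t x₂) u₁ x₁) (hu₂ : HasDerivAt (fun t => u x₁ t) u₂ x₂)
    (hv₁ : HasDerivAt (fun t => v t x₂) v₁ x₁) (hv₂ : HasDerivAt (fun t => v x₁ t) v₂ x₂) :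
    dzetabar (fun a b => (u a b : ℂ) + I * v a b) x₁ x₂ = (u₂ - v₁ : ℝ) + I * (v₂ + u₁ : ℝ) := by
  have h₂ : HasDerivAt (fun t => (u x₁ t : ℂ) + I * v x₁ t) (u₂ + I * v₂) x₂ :=
    hu₂.ofReal_comp.add (hv₂.ofReal_comp.const_mul I)
  have h₁ : HasDerivAt (fun t => (u t x₂ : ℂ) + I * v t x₂) (u₁ + I * v₁) x₁ :=
    hu₁.ofReal_comp.add (hv₁.ofReal_comp.const_mul I)
  rw [dzetabar, h₂.deriv, h₁.deriv]
  push_cast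
  linear_combination (v₁ : ℂ) * I_mul_I

theorem dzetabar_sub_mul_conj_eq_zero {u v : ℝ → ℝ → ℝ} {x₁ x₂ u₁ u₂ v₁ v₂ : ℝ} (α β : ℝ)
    (hu₁ : HasDerivAt (fun t => u t x₂) u₁ x₁) (hu₂ : HasDerivAt (fun t => u x₁ t) u₂ x₂)
    (hv₁ : HasDerivAt (fun t => v t x₂) v₁ x₁) (hv₂ : HasDerivAt (fun t => v x₁ t) v₂ x₂)
    (hre : u₂ - v₁ = β * u x₁ x₂ - α * v x₁ x₂)
    (him : v₂ + u₁ = -(α * u x₁ x₂ + β * v x₁ x₂)) :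
    dzetabar (fun a b => (u a b : ℂ) + I * v a b) x₁ x₂
      - ((β : ℂ) - I * α) * starRingEnd ℂ ((u x₁ x₂ : ℂ) + I * v x₁ x₂) = 0 := by
  rw [dzetabar_ofReal_add_I_mul hu₁ hu₂ hv₁ hv₂, hre, him]
  apply Complex.ext <;> simp

theorem hasFDerivAt_mul_exp_mul_sinh {E : Type*} [NormedAddCommGroup E] [NormedSpace ℝ E]
    (ℓ₁ ℓ₂ : E →L[ℝ] ℝ) (a b c : ℝ) :
    HasFDerivAt (fun p => c * Real.exp (b * ℓ₂ p) * Real.sinh (a * ℓ₁ p)) ((c * a) • ℓ₁) 0 := by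
  have hexp := ((ℓ₂.hasFDerivAt (x := 0)).const_mul b).exp.const_mul c
  have hsinh := ((ℓ₁.hasFDerivAt (x := 0)).const_mul a).sinh
  refine (hexp.mul hsinh).congr_fderiv ?_
  ext p
  simp
  ring

theorem tendsto_div_of_hasFDerivAt {E : Type*} [NormedAddCommGroup E] [NormedSpace ℝ E]
    {g : E → ℂ} (ζ : E ≃L[ℝ] ℂ) {c : ℂ} (hg : HasFDerivAt g (c • (ζ : E →L[ℝ] ℂ)) 0)
    (hg0 : g 0 = 0) :
    Tendsto (fun q => g q / ζ q) (𝓝[≠] 0) (𝓝 c) := by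
  have hlo : (fun q => g q - c * ζ q) =o[𝓝 0] fun q => ζ q := by
    simpa [hg0] using hg.isLittleO.trans_isBigO (ζ.isBigO_sub_rev (𝓝 0) 0)
  have hdiv := (hlo.mono (nhdsWithin_le_nhds (s := {0}ᶜ))).tendsto_div_nhds_zero.const_add c
  rw [add_zero] at hdiv
  refine hdiv.congr' ?_
  filter_upwards [self_mem_nhdsWithin] with q hq
  have : ζ q ≠ 0 := by simpa using hq
  field_simp
  ring

noncomputable def zetaEquiv : (ℝ × ℝ) ≃L[ℝ] ℂ :=
  (ContinuousLinearEquiv.prodComm ℝ ℝ ℝ).trans equivRealProdCLM.symm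

@[simp] theorem zetaEquiv_apply (q : ℝ × ℝ) : zetaEquiv q = q.2 + I * q.1 := by
  simp [zetaEquiv, equivRealProdCLM_symm_apply, mul_comm]

/-- The first formal power `Z⁽¹⁾(i)` solves the Vekua equation
`∂_ζ̄ W − (σ₂ − iσ₁) conj W = 0`, vanishes at the origin, and satisfies
`Z⁽¹⁾(i)(x₁,x₂)/(x₂ + ix₁) → i` as `(x₁,x₂) → (0,0)`. -/
theorem formal_power_degree_one_coefficient_i
    (σ₁ σ₂ : ℝ) (hσ₁ : σ₁ ≠ 0) (hσ₂ : σ₂ ≠ 0)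
    (Z : ℝ → ℝ → ℂ)
    (hZ : Z = fun x₁ x₂ =>
      ((-(1 / σ₁) * Real.exp (σ₂ * x₂) * Real.sinh (σ₁ * x₁) : ℝ) : ℂ)
        + Complex.I * ((1 / σ₂ * Real.exp (σ₁ * x₁) * Real.sinh (σ₂ * x₂) : ℝ) : ℂ)) :
    (∀ x₁ x₂, dzetabar Z x₁ x₂
        - ((σ₂ : ℂ) - Complex.I * (σ₁ : ℂ)) * (starRingEnd ℂ) (Z x₁ x₂) = 0) ∧
    Z 0 0 = 0 ∧
    Filter.Tendsto (fun q : ℝ × ℝ => Z q.1 q.2 / ((q.2 : ℂ) + Complex.I * (q.1 : ℂ)))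
      (nhdsWithin ((0, 0) : ℝ × ℝ) {((0, 0) : ℝ × ℝ)}ᶜ) (nhds Complex.I) := by
  subst hZ
  refine ⟨fun x₁ x₂ => ?_, by simp, ?_⟩
  · have hlin (σ x : ℝ) : HasDerivAt (fun t => σ * t) σ x := by
      simpa using (hasDerivAt_id x).const_mul σ
    refine dzetabar_sub_mul_conj_eq_zero σ₁ σ₂
      ((hlin σ₁ x₁).sinh.const_mul _) (((hlin σ₂ x₂).exp.const_mul _).mul_const _)
      (((hlin σ₁ x₁).exp.const_mul _).mul_const _) ((hlin σ₂ x₂).sinh.const_mul _)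
      (by ring) ?_
    have h₁ := Real.cosh_add_sinh (σ₁ * x₁)
    have h₂ := Real.cosh_add_sinh (σ₂ * x₂)
    field_simp
    linear_combination Real.exp (σ₁ * x₁) * h₂ - Real.exp (σ₂ * x₂) * h₁
  · have hu := hasFDerivAt_mul_exp_mul_sinh (.fst ℝ ℝ ℝ) (.snd ℝ ℝ ℝ) σ₁ σ₂ (-(1 / σ₁))
    have hv := hasFDerivAt_mul_exp_mul_sinh (.snd ℝ ℝ ℝ) (.fst ℝ ℝ ℝ) σ₂ σ₁ (1 / σ₂)
    have hZ : HasFDerivAt (fun q : ℝ × ℝ =>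
          ((-(1 / σ₁) * Real.exp (σ₂ * q.2) * Real.sinh (σ₁ * q.1) : ℝ) : ℂ)
            + I * ((1 / σ₂ * Real.exp (σ₁ * q.1) * Real.sinh (σ₂ * q.2) : ℝ) : ℂ))
        (I • (zetaEquiv : ℝ × ℝ →L[ℝ] ℂ)) 0 := by
      refine ((ofRealCLM.hasFDerivAt.comp _ hu).add
        ((ofRealCLM.hasFDerivAt.comp _ hv).const_mul I)).congr_fderiv ?_
      ext <;> simp [hσ₁, hσ₂]
    refine (tendsto_div_of_hasFDerivAt zetaEquiv hZ (by simp)).congr fun q => ?_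
    rw [zetaEquiv_apply]
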